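/- With α = 0 (pure ridge with diagonal target T), the graphical elastic net minimizer Θ* satisfies the matrix equation Θ*⁻¹ = S + λ(Θ* − T), and if S and T commute and are simultaneously diagonalizable with eigenvalues s_i and t_i, then Θ* has the same eigenvectors with eigenvalues θ_i = ( −(s_i − λ t_i) + sqrt((s_i − λ t_i)² + 4λ) ) / (2λ). -/

import Mathlib

/-!
`log det` is concave with tangent bound `log det Θ ≤ log det Θ₀ + tr (Θ₀⁻¹ (Θ - Θ₀))`, so at a
positive definite `Θ₀` solving the stationarity equation `Θ₀⁻¹ = S + λ (Θ₀ - T)` the objective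
grows by at least `λ/2 ‖Θ - Θ₀‖²`. A minimizer therefore coincides with any stationary point, and
one is written down in the common eigenbasis `U` of `S` and `T`: conjugation by `U` is an algebra
map on diagonals, turning the matrix equation into the scalar quadratics
`λ θ² + (s - λ t) θ - 1 = 0`, solved by their positive roots.
-/

open Matrix BigOperators

/-- The ridge (α = 0) graphical objective with target matrix `T`. -/
noncomputable def ridgeObj {p : ℕ} (S T : Matrix (Fin p) (Fin p) ℝ) (l : ℝ)
    (Θ : Matrix (Fin p) (Fin p) ℝ) : ℝ :=
  -Real.log Θ.det + (S * Θ).trace + l / 2 * ∑ i, ∑ j, (Θ i j - T i j) ^ 2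

namespace Matrix.PosDef

variable {n : Type*} [Fintype n] [DecidableEq n] {A B : Matrix n n ℝ}

theorem log_det_le_trace_sub_card (hA : A.PosDef) :
    Real.log A.det ≤ A.trace - Fintype.card n := by
  have hdet : A.det = ∏ i, hA.1.eigenvalues i := by
    simpa using hA.1.det_eq_prod_eigenvalues
  have htr : A.trace = ∑ i, hA.1.eigenvalues i := by
    simpa using hA.1.trace_eq_sum_eigenvalues
  rw [hdet, htr, Real.log_prod fun i _ => (hA.eigenvalues_pos i).ne']
  calc ∑ i, Real.log (hA.1.eigenvalues i) ≤ ∑ i, (hA.1.eigenvalues i - 1) :=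
        Finset.sum_le_sum fun i _ => Real.log_le_sub_one_of_pos (hA.eigenvalues_pos i)
    _ = _ := by simp [Finset.sum_sub_distrib]

open scoped MatrixOrder in
theorem log_det_le_log_det_add_trace (hA : A.PosDef) (hB : B.PosDef) :
    Real.log B.det ≤ Real.log A.det + (A⁻¹ * (B - A)).trace := by
  obtain ⟨C, hAC⟩ := CStarAlgebra.nonneg_iff_eq_star_mul_self.mp hA.inv.posSemidef.nonneg
  have hCdet : (star C).det * C.det = A.det⁻¹ := by
    rw [← det_mul, ← hAC, det_nonsing_inv, Ring.inverse_eq_inv']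
  have hC : IsUnit C := by
    rw [isUnit_iff_isUnit_det, isUnit_iff_ne_zero]
    intro h
    rw [h, mul_zero, eq_comm, inv_eq_zero] at hCdet
    exact hA.det_pos.ne' hCdet
  have hM : (C * B * star C).PosDef := hC.posDef_star_right_conjugate_iff.mpr hB
  have hdetM : (C * B * star C).det = A.det⁻¹ * B.det := by
    rw [← hCdet, det_mul, det_mul]
    ring
  have htrM : (C * B * star C).trace = (A⁻¹ * B).trace := by
    rw [trace_mul_cycle, ← hAC]
  have htr : (A⁻¹ * (B - A)).trace = (A⁻¹ * B).trace - Fintype.card n := by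
    rw [Matrix.mul_sub, nonsing_inv_mul _ hA.det_pos.ne'.isUnit, trace_sub, trace_one]
  have hlog := hM.log_det_le_trace_sub_card
  rw [hdetM, htrM, Real.log_mul (inv_ne_zero hA.det_pos.ne') hB.det_pos.ne', Real.log_inv] at hlog
  linarith

end Matrix.PosDef

theorem Matrix.sum_sq_apply_eq_trace {m n : Type*} [Fintype m] [Fintype n] (A : Matrix m n ℝ) :
    ∑ i, ∑ j, A i j ^ 2 = (A * Aᵀ).trace := by
  simp [← sum_hadamard_eq, sq]

section Ridge

variable {p : ℕ} {S T Θ Θ₀ : Matrix (Fin p) (Fin p) ℝ} {l : ℝ}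

theorem ridgeObj_eq_trace (S T : Matrix (Fin p) (Fin p) ℝ) (l : ℝ)
    (Θ : Matrix (Fin p) (Fin p) ℝ) :
    ridgeObj S T l Θ =
      -Real.log Θ.det + (S * Θ).trace + l / 2 * ((Θ - T) * (Θ - T)ᵀ).trace := by
  rw [ridgeObj, ← sum_sq_apply_eq_trace]
  rfl

theorem ridgeObj_add_le_of_inv_eq (hΘ₀ : Θ₀.PosDef) (hstat : Θ₀⁻¹ = S + l • (Θ₀ - T))
    (hΘ : Θ.PosDef) :
    ridgeObj S T l Θ₀ + l / 2 * ((Θ - Θ₀) * (Θ - Θ₀)ᵀ).trace ≤ ridgeObj S T l Θ := by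
  set E := Θ - Θ₀
  have hE : Eᵀ = E := by
    rw [transpose_sub, (isHermitian_iff_isSymm.mp hΘ.1).eq, (isHermitian_iff_isSymm.mp hΘ₀.1).eq]
  have hpenalty : ((Θ - T) * (Θ - T)ᵀ).trace
      = ((Θ₀ - T) * (Θ₀ - T)ᵀ).trace + 2 * ((Θ₀ - T) * E).trace + (E * Eᵀ).trace := by
    have hsplit : Θ - T = (Θ₀ - T) + E := by rw [add_comm, sub_add_sub_cancel]
    have hcross : (E * (Θ₀ - T)ᵀ).trace = ((Θ₀ - T) * E).trace := by
      rw [← trace_transpose, transpose_mul, transpose_transpose, hE]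
    rw [hsplit, transpose_add, Matrix.add_mul, Matrix.mul_add, Matrix.mul_add, trace_add,
      trace_add, trace_add, hcross, hE]
    ring
  have hlinear : (S * Θ).trace = (S * Θ₀).trace + (S * E).trace := by
    rw [← trace_add, ← Matrix.mul_add, add_sub_cancel]
  have hgrad : (Θ₀⁻¹ * E).trace = (S * E).trace + l * ((Θ₀ - T) * E).trace := by
    rw [hstat, Matrix.add_mul, trace_add, smul_mul_assoc, trace_smul, smul_eq_mul]
  have hlogdet := hΘ₀.log_det_le_log_det_add_trace hΘ
  rw [ridgeObj_eq_trace, ridgeObj_eq_trace, hpenalty, hlinear]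
  linarith

theorem eq_of_ridgeObj_le_of_inv_eq (hl : 0 < l) (hΘ₀ : Θ₀.PosDef)
    (hstat : Θ₀⁻¹ = S + l • (Θ₀ - T)) (hΘ : Θ.PosDef)
    (hle : ridgeObj S T l Θ ≤ ridgeObj S T l Θ₀) :
    Θ = Θ₀ := by
  have hgap := ridgeObj_add_le_of_inv_eq hΘ₀ hstat hΘ
  rw [← conjTranspose_eq_transpose_of_trivial] at hgap
  have hnonneg := (posSemidef_self_mul_conjTranspose (Θ - Θ₀)).trace_nonneg
  have hzero : ((Θ - Θ₀) * (Θ - Θ₀)ᴴ).trace = 0 := by nlinarith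
  rwa [trace_mul_conjTranspose_self_eq_zero_iff, sub_eq_zero] at hzero

end Ridge

section ConjDiagonal

variable {n : Type*} [Fintype n] [DecidableEq n] {U : Matrix n n ℝ}

noncomputable def conjDiagonalAlgHom (hU : U * Uᵀ = 1) : (n → ℝ) →ₐ[ℝ] Matrix n n ℝ :=
  (Unitary.conjStarAlgAut ℝ _ ⟨U, mem_unitaryGroup_iff.mpr (by
    rwa [star_eq_conjTranspose, conjTranspose_eq_transpose_of_trivial])⟩).toAlgEquiv.toAlgHom.comp
    (diagonalAlgHom ℝ)

theorem conjDiagonalAlgHom_apply (hU : U * Uᵀ = 1) (d : n → ℝ) :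
    conjDiagonalAlgHom hU d = U * diagonal d * Uᵀ := by
  simp [conjDiagonalAlgHom, star_eq_conjTranspose]

theorem posDef_conjDiagonalAlgHom (hU : U * Uᵀ = 1) {d : n → ℝ} (hd : ∀ i, 0 < d i) :
    (conjDiagonalAlgHom hU d).PosDef := by
  rw [conjDiagonalAlgHom_apply, ← conjTranspose_eq_transpose_of_trivial, ← star_eq_conjTranspose]
  exact (IsUnit.of_mul_eq_one _ hU).posDef_star_right_conjugate_iff.mpr (posDef_diagonal_iff.mpr hd)

end ConjDiagonal

noncomputable def ridgeRoot (l s t : ℝ) : ℝ :=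
  (-(s - l * t) + √((s - l * t) ^ 2 + 4 * l)) / (2 * l)

section RidgeRoot

variable {l : ℝ}

theorem ridgeRoot_pos (hl : 0 < l) (s t : ℝ) : 0 < ridgeRoot l s t := by
  have hdisc : s - l * t < √((s - l * t) ^ 2 + 4 * l) :=
    Real.lt_sqrt_of_sq_lt (by linarith)
  unfold ridgeRoot
  apply div_pos <;> linarith

theorem ridgeRoot_mul_eq_one (hl : 0 < l) (s t : ℝ) :
    ridgeRoot l s t * (s + l * (ridgeRoot l s t - t)) = 1 := by
  have hsq := Real.sq_sqrt (by positivity : 0 ≤ (s - l * t) ^ 2 + 4 * l)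
  unfold ridgeRoot
  generalize √((s - l * t) ^ 2 + 4 * l) = r at hsq ⊢
  field_simp
  linear_combination hsq

end RidgeRoot

theorem ridge_target_minimizer_eigen_general {p : ℕ}
    (S T Θstar U : Matrix (Fin p) (Fin p) ℝ) (l : ℝ) (s t : Fin p → ℝ)
    (hl : 0 < l)
    (hU : U * Uᵀ = 1)
    (hSdiag : S = U * Matrix.diagonal s * Uᵀ)
    (hTdiag : T = U * Matrix.diagonal t * Uᵀ)
    (hΘ : Θstar.PosDef)
    (hmin : ∀ Θ : Matrix (Fin p) (Fin p) ℝ, Θ.PosDef →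
      ridgeObj S T l Θstar ≤ ridgeObj S T l Θ) :
    Θstar⁻¹ = S + l • (Θstar - T) ∧
    Θstar = U * Matrix.diagonal (fun i =>
      (-(s i - l * t i) + Real.sqrt ((s i - l * t i) ^ 2 + 4 * l)) / (2 * l)) * Uᵀ := by
  let θ : Fin p → ℝ := fun i => ridgeRoot l (s i) (t i)
  have hroot : θ * (s + l • (θ - t)) = 1 := funext fun i => ridgeRoot_mul_eq_one hl (s i) (t i)
  have hstat : (conjDiagonalAlgHom hU θ)⁻¹ = S + l • (conjDiagonalAlgHom hU θ - T) := by
    rw [hSdiag, hTdiag, ← conjDiagonalAlgHom_apply hU, ← conjDiagonalAlgHom_apply hU, ← map_sub,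
      ← map_smul, ← map_add]
    exact inv_eq_right_inv (by rw [← map_mul, hroot, map_one])
  have hpd : (conjDiagonalAlgHom hU θ).PosDef :=
    posDef_conjDiagonalAlgHom hU fun i => ridgeRoot_pos hl (s i) (t i)
  have hΘstar : Θstar = conjDiagonalAlgHom hU θ :=
    eq_of_ridgeObj_le_of_inv_eq hl hpd hstat hΘ (hmin _ hpd)
  refine ⟨hΘstar ▸ hstat, ?_⟩
  rw [hΘstar, conjDiagonalAlgHom_apply]
  rfl

/-- Pure ridge with diagonal target: the minimizer satisfies
`Θ*⁻¹ = S + λ(Θ* - T)`, and if `S` and `T` are simultaneously diagonalized by an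
orthogonal matrix `U` with eigenvalues `s i`, `t i`, then `Θ*` has the same
eigenvectors with eigenvalues the positive roots of the scalar quadratics. -/
theorem ridge_target_minimizer_eigen {p : ℕ}
    (S T Θstar U : Matrix (Fin p) (Fin p) ℝ) (l : ℝ) (s t : Fin p → ℝ)
    (hl : 0 < l)
    (hU : U * Uᵀ = 1)
    (hSdiag : S = U * Matrix.diagonal s * Uᵀ)
    (hTdiag : T = U * Matrix.diagonal t * Uᵀ)
    (hSpsd : S.PosSemidef) (hTpsd : T.PosSemidef)
    (hΘ : Θstar.PosDef)
    (hmin : ∀ Θ : Matrix (Fin p) (Fin p) ℝ, Θ.PosDef →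
      ridgeObj S T l Θstar ≤ ridgeObj S T l Θ) :
    Θstar⁻¹ = S + l • (Θstar - T) ∧
    Θstar = U * Matrix.diagonal (fun i =>
      (-(s i - l * t i) + Real.sqrt ((s i - l * t i) ^ 2 + 4 * l)) / (2 * l)) * Uᵀ :=
  ridge_target_minimizer_eigen_general S T Θstar U l s t hl hU hSdiag hTdiag hΘ hmin
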